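/- Let a_1 ≤ a_2 ≤ ... ≤ a_r be positive integers and suppose that for all m with 2 ≤ m ≤ r−1 one has (m−1)·a_{m+1} ≤ ∑_{i=1}^m a_i − m. Define p = ⌊(∑_{i=1}^r a_i − r)/(r−1)⌋. Then a_i ≤ p+1 for all i = 1,...,r. -/
import Mathlib


theorem bounded_by_floor (r : ℕ) (hr : 3 ≤ r) (a : ℕ → ℤ)
    (hpos : ∀ i, 1 ≤ i → i ≤ r → 1 ≤ a i)
    (hmono : ∀ i j, 1 ≤ i → i ≤ j → j ≤ r → a i ≤ a j)
    (hcond : ∀ m, 2 ≤ m → m ≤ r - 1 →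
      ((m : ℤ) - 1) * a (m + 1) ≤ (∑ i ∈ Finset.Icc 1 m, a i) - (m : ℤ))
    (p : ℤ) (hp : p = Int.fdiv ((∑ i ∈ Finset.Icc 1 r, a i) - (r : ℤ)) ((r : ℤ) - 1)) :
    ∀ i, 1 ≤ i → i ≤ r → a i ≤ p + 1 := by
  intro i hi hir
  have hair : a i ≤ a r := hmono i r hi hir le_rfl
  have key := hcond (r - 1) (by omega) le_rfl
  have hrw : r - 1 + 1 = r := by omega
  rw [hrw] at key
  have hcast : ((r - 1 : ℕ) : ℤ) = (r : ℤ) - 1 := by omega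
  rw [hcast] at key
  have hsum : ∑ j ∈ Finset.Icc 1 r, a j = (∑ j ∈ Finset.Icc 1 (r - 1), a j) + a r := by
    rw [← hrw, Finset.sum_Icc_succ_top (by omega)]; rw [Nat.add_sub_cancel]
  set S := ∑ j ∈ Finset.Icc 1 r, a j with hS
  have hrb : (0 : ℤ) < (r : ℤ) - 1 := by
    have : (3 : ℤ) ≤ (r : ℤ) := by exact_mod_cast hr
    omega
  have hlt := Int.lt_fdiv_add_one_mul_self (S - (r : ℤ)) hrb
  rw [← hp] at hlt
  -- key : ((r:ℤ)-1-1) * a r ≤ (S - a r) - ((r:ℤ)-1)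
  have h1 : ((r : ℤ) - 1) * a r ≤ S - (r : ℤ) + 1 := by
    have := hsum
    linarith
  nlinarith
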